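/- arXiv:math/0110217 — 5 statements merged into one kernel-verified Lean document; each statement's English description precedes it below -/
import Mathlib

section
/- For every t ∈ [0, 1/2] one has (4/π)·∫_0^{π/4} H(t/(cos ω + sin ω)) dω = (4/π)·∫_{π/4}^{π/2} (1 − √2·t/(ζ(2)·sin ω)) dω = 1 − (4·√2·ln(1+√2)/(π·ζ(2)))·t. In particular the limiting repartition function F(t) = (4/π)·∫_0^{π/4} H(t/(cos ω + sin ω)) dω is linear on [0, 1/2]. -/
open Real MeasureTheory Set

noncomputable def zeta2 : ℝ := Real.pi ^ 2 / 6

noncomputable def psi (x : ℝ) : ℝ := ((1 - x) / x) * (1 + Real.log (x / (1 - x)))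

/-- The limiting repartition function, with `H 0 = 1`. -/
noncomputable def Hlim (t : ℝ) : ℝ :=
  if t ≤ 1 / 2 then 1 - 2 * t / zeta2
  else if t ≤ 1 then (2 / zeta2) * ∫ x in t..1, psi x
  else 0

/-! Since `cos ω + sin ω ≥ 1` on `[0, π/4]`, only the linear branch of `H` is met, and
`cos ω + sin ω = √2 sin (ω + π/4)` turns the integral into one of `1/sin` over `[π/4, π/2]`,
whose primitive is `log (sin x / (1 + cos x)) = log (tan (x/2))`. -/

lemma zeta2_pos : 0 < zeta2 := by
  unfold zeta2; positivity

lemma Hlim_of_le_half {t : ℝ} (ht : t ≤ 1 / 2) : Hlim t = 1 - 2 * t / zeta2 :=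
  if_pos ht

lemma one_le_cos_add_sin {ω : ℝ} (h0 : 0 ≤ ω) (h1 : ω ≤ π / 2) : 1 ≤ cos ω + sin ω := by
  have hs : 0 ≤ sin ω := sin_nonneg_of_nonneg_of_le_pi h0 (by linarith [pi_pos])
  have hc : 0 ≤ cos ω := cos_nonneg_of_mem_Icc ⟨by linarith [pi_pos], h1⟩
  nlinarith [sin_sq_add_cos_sq ω, mul_nonneg hs hc]

lemma cos_add_sin_eq_sqrt_two_mul_sin (ω : ℝ) : cos ω + sin ω = √2 * sin (ω + π / 4) := by
  rw [sin_add, cos_pi_div_four, sin_pi_div_four]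
  linear_combination -(sin ω + cos ω) / 2 * mul_self_sqrt (zero_le_two : (0 : ℝ) ≤ 2)

lemma hasDerivAt_log_sin_div_one_add_cos {x : ℝ} (hx : sin x ≠ 0) :
    HasDerivAt (fun x => log (sin x / (1 + cos x))) (sin x)⁻¹ x := by
  have hcos : 1 + cos x ≠ 0 := by
    intro h
    have := sin_sq_add_cos_sq x
    rw [show cos x = -1 by linarith] at this
    exact hx (by nlinarith)
  have hquot := (hasDerivAt_sin x).div ((hasDerivAt_const x 1).add (hasDerivAt_cos x)) hcos
  refine ((hasDerivAt_log (div_ne_zero hx hcos)).comp x hquot).congr_deriv ?_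
  simp only [Pi.add_apply]
  field_simp
  nlinarith [sin_sq_add_cos_sq x]

lemma integral_inv_sin {a b : ℝ} (ha : 0 < a) (hab : a ≤ b) (hb : b < π) :
    ∫ x in a..b, (sin x)⁻¹ = log (sin b / (1 + cos b)) - log (sin a / (1 + cos a)) := by
  have hsin : ∀ x ∈ uIcc a b, sin x ≠ 0 := fun x hx => by
    rw [uIcc_of_le hab] at hx
    exact (sin_pos_of_pos_of_lt_pi (ha.trans_le hx.1) (hx.2.trans_lt hb)).ne'
  refine intervalIntegral.integral_eq_sub_of_hasDerivAt
    (fun x hx => hasDerivAt_log_sin_div_one_add_cos (hsin x hx)) ?_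
  exact (continuous_sin.continuousOn.inv₀ hsin).intervalIntegrable

lemma integral_inv_sin_pi_div_four_pi_div_two :
    ∫ x in (π / 4)..(π / 2), (sin x)⁻¹ = log (1 + √2) := by
  have hpi := pi_pos
  rw [integral_inv_sin (by positivity) (by linarith) (by linarith), sin_pi_div_two,
    cos_pi_div_two, sin_pi_div_four, cos_pi_div_four]
  have h2 : √2 * √2 = 2 := mul_self_sqrt zero_le_two
  have hquot : √2 / 2 / (1 + √2 / 2) = (1 + √2)⁻¹ := by
    rw [inv_eq_one_div, div_eq_div_iff (by positivity) (by positivity)]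
    linear_combination h2 / 2
  rw [hquot, log_inv]
  norm_num

lemma integral_Hlim_eq_integral_shifted {t : ℝ} (ht : t ≤ 1 / 2) :
    ∫ ω in (0 : ℝ)..(π / 4), Hlim (t / (cos ω + sin ω))
      = ∫ ω in (π / 4)..(π / 2), (1 - √2 * t / (zeta2 * sin ω)) := by
  have hpi := pi_pos
  have hshift := intervalIntegral.integral_comp_add_right
    (fun u => 1 - √2 * t / (zeta2 * sin u)) (a := 0) (b := π / 4) (π / 4)
  rw [zero_add, show π / 4 + π / 4 = π / 2 by ring] at hshift
  rw [← hshift]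
  refine intervalIntegral.integral_congr fun ω hω => ?_
  rw [uIcc_of_le (by linarith)] at hω
  have hge := one_le_cos_add_sin hω.1 (by linarith [hω.2])
  have hpos : 0 < cos ω + sin ω := by linarith
  have harg : t / (cos ω + sin ω) ≤ 1 / 2 := by
    rw [div_le_iff₀ hpos]; linarith
  have hsin : sin (ω + π / 4) ≠ 0 := by
    rw [cos_add_sin_eq_sqrt_two_mul_sin] at hpos
    exact (pos_of_mul_pos_right hpos (sqrt_nonneg 2)).ne'
  have hz := zeta2_pos.ne'
  have h2 : √2 * √2 = 2 := mul_self_sqrt zero_le_two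
  rw [Hlim_of_le_half harg, cos_add_sin_eq_sqrt_two_mul_sin]
  generalize sin (ω + π / 4) = s at hsin ⊢
  field_simp
  linear_combination t * h2

lemma integral_one_sub_div_sin (t : ℝ) :
    ∫ ω in (π / 4)..(π / 2), (1 - √2 * t / (zeta2 * sin ω))
      = π / 4 - √2 * t / zeta2 * log (1 + √2) := by
  have hint : IntervalIntegrable (fun ω => (sin ω)⁻¹) volume (π / 4) (π / 2) := by
    refine intervalIntegral.intervalIntegrable_of_integral_ne_zero ?_
    rw [integral_inv_sin_pi_div_four_pi_div_two]
    exact (log_pos (by linarith [sqrt_pos.2 (zero_lt_two : (0 : ℝ) < 2)])).ne'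
  have hintegrand : (fun ω => 1 - √2 * t / (zeta2 * sin ω))
      = fun ω => 1 - √2 * t / zeta2 * (sin ω)⁻¹ := by
    funext ω; ring
  rw [hintegrand, intervalIntegral.integral_sub intervalIntegrable_const (hint.const_mul _),
    intervalIntegral.integral_const, intervalIntegral.integral_const_mul,
    integral_inv_sin_pi_div_four_pi_div_two, smul_eq_mul]
  ring

theorem statement3 (t : ℝ) (ht : t ∈ Set.Icc (0 : ℝ) (1 / 2)) :
    (4 / Real.pi) * ∫ ω in (0 : ℝ)..(Real.pi / 4),
        Hlim (t / (Real.cos ω + Real.sin ω))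
      = (4 / Real.pi) * ∫ ω in (Real.pi / 4)..(Real.pi / 2),
          (1 - Real.sqrt 2 * t / (zeta2 * Real.sin ω)) ∧
    (4 / Real.pi) * ∫ ω in (0 : ℝ)..(Real.pi / 4),
        Hlim (t / (Real.cos ω + Real.sin ω))
      = 1 - (4 * Real.sqrt 2 * Real.log (1 + Real.sqrt 2) / (Real.pi * zeta2)) * t := by
  rw [integral_Hlim_eq_integral_shifted ht.2, integral_one_sub_div_sin]
  refine ⟨rfl, ?_⟩
  have := pi_pos.ne'
  have := zeta2_pos.ne'
  field_simp
end

section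
/- ∫_{1/2}^1 ψ(x) dx = (ζ(2) − 1)/2 = π²/12 − 1/2. -/
/-! Write `ψ x = (1 - x) / x * (1 + log x) + log (1 - x) - log (1 - x) / x`. The first two terms
have an elementary antiderivative; the last one integrates over `[1/2, 1]` to `Li₂ (1/2) - Li₂ 1`.
Integrating `-log (1 - x) / x = ∑ xⁿ / (n + 1)` termwise gives `Li₂ 1 = ζ(2)`, and differentiating
`log x * log (1 - x)` gives Euler's reflection formula
`Li₂ a + Li₂ (1 - a) = ζ(2) - log a * log (1 - a)`, whence `Li₂ (1/2) = ζ(2) / 2 - (log 2)² / 2`. -/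

open Real MeasureTheory

open Set Filter Topology Asymptotics intervalIntegral

lemma hasSum_one_div_succ_sq : HasSum (fun n : ℕ => 1 / ((n : ℝ) + 1) ^ 2) (π ^ 2 / 6) := by
  simpa using (hasSum_nat_add_iff' 1).mpr hasSum_zeta_two

lemma hasSum_pow_div_succ {x : ℝ} (hx : |x| < 1) (hx0 : x ≠ 0) :
    HasSum (fun n : ℕ => x ^ n / (n + 1)) (-log (1 - x) / x) := by
  refine ((hasSum_pow_div_log_of_abs_lt_one hx).div_const x).congr_fun fun n => ?_
  rw [pow_succ]
  field_simp

theorem integral_log_one_sub_div_self :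
    ∫ x in (0 : ℝ)..1, log (1 - x) / x = -(π ^ 2 / 6) := by
  let F : ℕ → ℝ → ℝ := fun n x => x ^ n / (n + 1)
  have hF n : ∫ x in Ioo (0 : ℝ) 1, F n x = 1 / ((n : ℝ) + 1) ^ 2 := by
    rw [← integral_Ioc_eq_integral_Ioo, ← integral_of_le zero_le_one,
      intervalIntegral.integral_div, integral_pow]
    field_simp
    ring
  have hF_norm n : ∫ x in Ioo (0 : ℝ) 1, ‖F n x‖ = 1 / ((n : ℝ) + 1) ^ 2 := by
    rw [← hF n]
    exact setIntegral_congr_fun measurableSet_Ioo fun x hx =>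
      norm_of_nonneg (div_nonneg (pow_nonneg hx.1.le n) n.cast_add_one_pos.le)
  have hF_int n : IntegrableOn (F n) (Ioo 0 1) :=
    ((continuous_pow n).div_const _).integrableOn_Icc.mono_set Ioo_subset_Icc_self
  have hsum := hasSum_integral_of_summable_integral_norm hF_int
    (hasSum_one_div_succ_sq.summable.congr fun n => (hF_norm n).symm)
  have htsum : ∫ x in Ioo (0 : ℝ) 1, ∑' n, F n x = -∫ x in Ioo (0 : ℝ) 1, log (1 - x) / x := by
    rw [← MeasureTheory.integral_neg]
    refine setIntegral_congr_fun measurableSet_Ioo fun x hx => ?_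
    rw [← neg_div]
    exact (hasSum_pow_div_succ (abs_lt.2 ⟨by linarith [hx.1], hx.2⟩) hx.1.ne').tsum_eq
  simp only [hF, htsum] at hsum
  rw [integral_of_le zero_le_one, integral_Ioc_eq_integral_Ioo]
  linarith [hsum.unique hasSum_one_div_succ_sq]

lemma continuousAt_log_mul_log_one_sub {x : ℝ} (hx : x < 1) :
    ContinuousAt (fun x => log x * log (1 - x)) x := by
  rcases eq_or_ne x 0 with rfl | hx0
  · have hlog : HasDerivAt (fun x => log (1 - x)) (-1) 0 := by
      simpa using ((hasDerivAt_id (0 : ℝ)).const_sub 1).log (by norm_num)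
    have hO : (fun x => log x * log (1 - x)) =O[𝓝 0] fun x => log x * x := by
      simpa using (isBigO_refl log (𝓝 (0 : ℝ))).mul hlog.isBigO_sub
    have hlim : Tendsto (fun x => log x * x) (𝓝 0) (𝓝 0) := by
      simpa [mul_comm] using continuous_mul_log.tendsto 0
    simpa [ContinuousAt] using hO.trans_tendsto hlim
  · exact (continuousAt_log hx0).mul
      ((continuousAt_const.sub continuousAt_id).log (sub_ne_zero.2 hx.ne'))

lemma hasDerivAt_log_mul_log_one_sub {x : ℝ} (hx0 : x ≠ 0) (hx1 : x ≠ 1) :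
    HasDerivAt (fun x => log x * log (1 - x)) (log (1 - x) / x - log x / (1 - x)) x := by
  have h1x : 1 - x ≠ 0 := sub_ne_zero.2 hx1.symm
  have hlog : HasDerivAt (fun x => log (1 - x)) (-1 / (1 - x)) x := by
    simpa using ((hasDerivAt_id x).const_sub 1).log h1x
  exact ((hasDerivAt_log hx0).mul hlog).congr_deriv (by field_simp; ring)

lemma intervalIntegrable_log_one_sub_div_self {b c : ℝ} (hb : b ∈ Icc (0 : ℝ) 1)
    (hc : c ∈ Icc (0 : ℝ) 1) : IntervalIntegrable (fun x => log (1 - x) / x) volume b c := by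
  have h01 : IntervalIntegrable (fun x => log (1 - x) / x) volume 0 1 :=
    intervalIntegrable_of_integral_ne_zero <| by
      rw [integral_log_one_sub_div_self]
      exact neg_ne_zero.2 (by positivity)
  rw [← uIcc_of_le zero_le_one] at hb hc
  exact h01.mono_set (uIcc_subset_uIcc hb hc)

noncomputable def dilog (a : ℝ) : ℝ := -∫ x in (0 : ℝ)..a, log (1 - x) / x

lemma dilog_one : dilog 1 = π ^ 2 / 6 := by
  rw [dilog, integral_log_one_sub_div_self, neg_neg]

lemma dilog_add_dilog_one_sub {a : ℝ} (ha0 : 0 ≤ a) (ha1 : a < 1) :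
    dilog a + dilog (1 - a) = π ^ 2 / 6 - log a * log (1 - a) := by
  have hmem0 : (0 : ℝ) ∈ Icc (0 : ℝ) 1 := left_mem_Icc.2 zero_le_one
  have hmem1 : (1 : ℝ) ∈ Icc (0 : ℝ) 1 := right_mem_Icc.2 zero_le_one
  have hmema : a ∈ Icc (0 : ℝ) 1 := ⟨ha0, ha1.le⟩
  have hmema' : 1 - a ∈ Icc (0 : ℝ) 1 := ⟨by linarith, by linarith⟩
  have hint := intervalIntegrable_log_one_sub_div_self hmem0 hmema
  have hint_refl : IntervalIntegrable (fun x => log x / (1 - x)) volume 0 a := by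
    simpa using (intervalIntegrable_log_one_sub_div_self hmem1 hmema').comp_sub_left 1
  have hrefl : ∫ x in (0 : ℝ)..a, log x / (1 - x) = ∫ x in (1 - a)..1, log (1 - x) / x := by
    simpa using integral_comp_sub_left (a := 0) (b := a) (fun x => log (1 - x) / x) 1
  have hFTC : ∫ x in (0 : ℝ)..a, (log (1 - x) / x - log x / (1 - x)) = log a * log (1 - a) := by
    rw [integral_eq_sub_of_hasDerivAt_of_le ha0
      (fun x hx => (continuousAt_log_mul_log_one_sub (by linarith [hx.2])).continuousWithinAt)
      (fun x hx => hasDerivAt_log_mul_log_one_sub hx.1.ne' (by linarith [hx.2]))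
      (hint.sub hint_refl)]
    simp
  have hsplit := integral_add_adjacent_intervals
    (intervalIntegrable_log_one_sub_div_self hmem0 hmema')
    (intervalIntegrable_log_one_sub_div_self hmema' hmem1)
  rw [integral_sub hint hint_refl, hrefl] at hFTC
  rw [integral_log_one_sub_div_self] at hsplit
  simp only [dilog]
  linarith

lemma integral_log_one_sub_div_self_eq_dilog_sub {a b : ℝ} (ha : a ∈ Icc (0 : ℝ) 1)
    (hb : b ∈ Icc (0 : ℝ) 1) : ∫ x in a..b, log (1 - x) / x = dilog a - dilog b := by
  have h0 : (0 : ℝ) ∈ Icc (0 : ℝ) 1 := left_mem_Icc.2 zero_le_one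
  rw [dilog, dilog, ← integral_interval_sub_left (intervalIntegrable_log_one_sub_div_self h0 hb)
    (intervalIntegrable_log_one_sub_div_self h0 ha)]
  ring

lemma dilog_one_half : dilog (1 / 2) = π ^ 2 / 12 - log 2 ^ 2 / 2 := by
  have h := dilog_add_dilog_one_sub (a := 1 / 2) (by norm_num) (by norm_num)
  rw [show (1 : ℝ) - 1 / 2 = 1 / 2 by norm_num, one_div, log_inv] at h
  linarith

lemma psi_eq_of_pos_of_le_one {x : ℝ} (hx0 : 0 < x) (hx1 : x ≤ 1) :
    psi x = (1 - x) / x * (1 + log x) + log (1 - x) - log (1 - x) / x := by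
  rcases hx1.eq_or_lt with rfl | hx1
  · -- both sides vanish at `x = 1`, since `log 0 = 0`
    simp [psi]
  · rw [psi, log_div hx0.ne' (sub_pos.2 hx1).ne']
    field_simp
    ring

lemma intervalIntegrable_one_sub_div_mul_one_add_log_add_log_one_sub :
    IntervalIntegrable (fun x => (1 - x) / x * (1 + log x) + log (1 - x)) volume (1 / 2) 1 := by
  have hcont : ContinuousOn (fun x => (1 - x) / x * (1 + log x)) (uIcc (1 / 2) 1) := by
    intro x hx
    have hx0 : x ≠ 0 := by
      rw [uIcc_of_le (by norm_num)] at hx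
      linarith [hx.1]
    exact ContinuousAt.continuousWithinAt (by fun_prop (disch := assumption))
  have hlog : IntervalIntegrable (fun x => log (1 - x)) volume (1 / 2) 1 := by
    convert (intervalIntegrable_log' (a := 1 / 2) (b := 0)).comp_sub_left 1 using 1 <;> norm_num
  exact hcont.intervalIntegrable.add hlog

lemma integral_one_sub_div_mul_one_add_log_add_log_one_sub :
    ∫ x in (1 / 2 : ℝ)..1, ((1 - x) / x * (1 + log x) + log (1 - x)) =
      -(log 2 ^ 2 / 2) - 1 / 2 := by
  have hderiv : ∀ x ∈ Ioo (1 / 2 : ℝ) 1, HasDerivAt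
      (fun x => log x + log x ^ 2 / 2 - x * log x - (1 - x) * log (1 - x) - x)
      ((1 - x) / x * (1 + log x) + log (1 - x)) x := by
    intro x hx
    have hx0 : x ≠ 0 := by linarith [hx.1]
    have h1x : 1 - x ≠ 0 := by linarith [hx.2]
    have hlog := hasDerivAt_log hx0
    have hmul := (hasDerivAt_mul_log h1x).comp x ((hasDerivAt_id x).const_sub 1)
    refine ((((hlog.add ((hlog.pow 2).div_const 2)).sub (hasDerivAt_mul_log hx0)).sub hmul).sub
      (hasDerivAt_id x)).congr_deriv ?_
    field_simp
    ring
  have hcont : ContinuousOn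
      (fun x => log x + log x ^ 2 / 2 - x * log x - (1 - x) * log (1 - x) - x) (Icc (1 / 2) 1) := by
    intro x hx
    have hx0 : x ≠ 0 := by linarith [hx.1]
    have hmul : Continuous fun x : ℝ => (1 - x) * log (1 - x) :=
      continuous_mul_log.comp (continuous_const.sub continuous_id)
    have hrest : ContinuousAt (fun x => log x + log x ^ 2 / 2 - x * log x) x := by
      fun_prop (disch := assumption)
    exact ((hrest.sub hmul.continuousAt).sub continuousAt_id).continuousWithinAt
  rw [integral_eq_sub_of_hasDerivAt_of_le (by norm_num) hcont hderiv
    intervalIntegrable_one_sub_div_mul_one_add_log_add_log_one_sub]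
  norm_num
  simp only [one_div, log_inv]
  ring

theorem statement4 :
    (∫ x in (1 / 2 : ℝ)..1, psi x) = (zeta2 - 1) / 2 ∧
    (zeta2 - 1) / 2 = Real.pi ^ 2 / 12 - 1 / 2 := by
  have hhalf : (1 / 2 : ℝ) ∈ Icc (0 : ℝ) 1 := ⟨by norm_num, by norm_num⟩
  have hψ : ∫ x in (1 / 2 : ℝ)..1, psi x = ∫ x in (1 / 2 : ℝ)..1,
      (((1 - x) / x * (1 + log x) + log (1 - x)) - log (1 - x) / x) := by
    refine integral_congr fun x hx => ?_
    rw [uIcc_of_le (by norm_num)] at hx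
    exact psi_eq_of_pos_of_le_one (by linarith [hx.1]) hx.2
  rw [hψ, integral_sub intervalIntegrable_one_sub_div_mul_one_add_log_add_log_one_sub
      (intervalIntegrable_log_one_sub_div_self hhalf (right_mem_Icc.2 zero_le_one)),
    integral_one_sub_div_mul_one_add_log_add_log_one_sub,
    integral_log_one_sub_div_self_eq_dilog_sub hhalf (right_mem_Icc.2 zero_le_one),
    dilog_one_half, dilog_one, zeta2]
  constructor <;> ring
end

section
/- Let Q ≥ 2 be an integer and let a′/q′ < a/q < a″/q″ be three consecutive Farey fractions of order Q (in lowest terms, so that q ≥ 2 and 1 ≤ a ≤ q−1). Then q′ = q·⌊(Q − ā)/q⌋ + ā and q″ = q·⌊(Q + ā)/q⌋ − ā, where ā is the multiplicative inverse of a modulo q. -/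
/-!
If `a * r - p * q = 1` with `q, r > 0`, any fraction `b / d` strictly between `p / r` and `a / q`
has `d = q * (b * r - p * d) + r * (a * d - b * q) ≥ q + r`; so when `r ≤ Q < q + r`, the fraction
`p / r` is the left neighbour of `a / q` in `F_Q`. The only `r` in `(Q - q, Q]` with `r ≡ ā (mod q)`
is `q * ⌊(Q - ā) / q⌋ + ā`, and `p = (a * r - 1) / q` completes the determinant identity. The right
neighbour follows from the symmetry `x ↦ 1 - x` of `F_Q`, which sends `a / q` to `(q - a) / q`,
whose inverse modulo `q` is `-ā`.
-/

/-- The set of Farey fractions of order `Q`: rationals in `[0,1]` whose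
(reduced) denominator is at most `Q`. -/
def Farey (Q : ℕ) : Set ℚ := {x : ℚ | 0 ≤ x ∧ x ≤ 1 ∧ x.den ≤ Q}

/-- `x` and `y` are consecutive elements of the Farey sequence of order `Q`. -/
def FareyConsec (Q : ℕ) (x y : ℚ) : Prop :=
  x ∈ Farey Q ∧ y ∈ Farey Q ∧ x < y ∧ ∀ z ∈ Farey Q, ¬(x < z ∧ z < y)

lemma Rat.den_intCast_div_intCast {a q : ℤ} (hq : 0 < q) (hco : IsCoprime a q) :
    (((a : ℚ) / q).den : ℤ) = q := by
  rw [Rat.den_div_eq_of_coprime hq (Int.isCoprime_iff_gcd_eq_one.mp hco)]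

lemma intCast_div_mem_farey {Q : ℕ} {p r : ℤ} (hr : 0 < r) (hco : IsCoprime p r) (hp : 0 ≤ p)
    (hpr : p ≤ r) (hrQ : r ≤ Q) : (p : ℚ) / r ∈ Farey Q := by
  have hr' : (0 : ℚ) < r := by exact_mod_cast hr
  refine ⟨div_nonneg (by exact_mod_cast hp) hr'.le,
    (div_le_one hr').mpr (by exact_mod_cast hpr), ?_⟩
  have := Rat.den_intCast_div_intCast hr hco
  omega

lemma one_sub_mem_farey {Q : ℕ} {x : ℚ} (hx : x ∈ Farey Q) : 1 - x ∈ Farey Q := by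
  obtain ⟨h0, h1, hden⟩ := hx
  refine ⟨by linarith, by linarith, ?_⟩
  simpa using (Rat.intCast_sub_den 1 x).trans_le hden

lemma FareyConsec.one_sub {Q : ℕ} {x y : ℚ} (h : FareyConsec Q x y) :
    FareyConsec Q (1 - y) (1 - x) := by
  obtain ⟨hx, hy, hxy, hgap⟩ := h
  refine ⟨one_sub_mem_farey hy, one_sub_mem_farey hx, by linarith, fun z hz ⟨h1, h2⟩ => ?_⟩
  exact hgap (1 - z) (one_sub_mem_farey hz) ⟨by linarith, by linarith⟩

lemma FareyConsec.left_unique {Q : ℕ} {x y z : ℚ} (hx : FareyConsec Q x z)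
    (hy : FareyConsec Q y z) : x = y := by
  rcases lt_trichotomy x y with h | h | h
  · exact absurd ⟨h, hy.2.2.1⟩ (hx.2.2.2 y hy.1)
  · exact h
  · exact absurd ⟨h, hx.2.2.1⟩ (hy.2.2.2 x hx.1)

lemma add_le_den_of_lt_of_lt {a q p r : ℤ} (hq : 0 < q) (hr : 0 < r) (hdet : a * r - p * q = 1)
    {z : ℚ} (hpz : (p : ℚ) / r < z) (hza : z < (a : ℚ) / q) : q + r ≤ z.den := by
  set b := z.num
  set d := (z.den : ℤ)
  have hd : 0 < d := Int.natCast_pos.mpr z.pos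
  have hz : z = (b : ℚ) / d := by simpa [b, d] using (Rat.num_div_den z).symm
  rw [hz, div_lt_div_iff₀ (by exact_mod_cast hr) (by exact_mod_cast hd)] at hpz
  rw [hz, div_lt_div_iff₀ (by exact_mod_cast hd) (by exact_mod_cast hq)] at hza
  have hleft : 1 ≤ b * r - p * d := by linarith [(by exact_mod_cast hpz : p * d < b * r)]
  have hright : 1 ≤ a * d - b * q := by linarith [(by exact_mod_cast hza : b * q < a * d)]
  calc q + r ≤ q * (b * r - p * d) + r * (a * d - b * q) := by nlinarith
    _ = d := by linear_combination d * hdet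

lemma fareyConsec_of_mul_sub_mul_eq_one {Q : ℕ} {a q p r : ℤ} (hq : 0 < q) (hr : 0 < r)
    (hdet : a * r - p * q = 1) (hQ : (Q : ℤ) < q + r) (hx : (p : ℚ) / r ∈ Farey Q)
    (hy : (a : ℚ) / q ∈ Farey Q) : FareyConsec Q ((p : ℚ) / r) ((a : ℚ) / q) := by
  refine ⟨hx, hy, ?_, fun z hz ⟨hpz, hza⟩ => ?_⟩
  · rw [div_lt_div_iff₀ (by exact_mod_cast hr) (by exact_mod_cast hq)]
    exact_mod_cast (by linarith : p * q < a * r)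
  · have := add_le_den_of_lt_of_lt hq hr hdet hpz hza
    have : (z.den : ℤ) ≤ Q := by exact_mod_cast hz.2.2
    omega

lemma mul_floor_div_add_bounds {n q c : ℤ} (hq : 0 < q) :
    n < q + (q * ⌊((n : ℚ) - c) / q⌋ + c) ∧ q * ⌊((n : ℚ) - c) / q⌋ + c ≤ n := by
  set k := ⌊((n : ℚ) - c) / q⌋
  have hq' : (0 : ℚ) < q := by exact_mod_cast hq
  have hlo : (q : ℚ) * k ≤ n - c := by
    rw [mul_comm, ← le_div_iff₀ hq']; exact Int.floor_le _
  have hhi : (n : ℚ) - c < q * (k + 1) := by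
    rw [mul_comm, ← div_lt_iff₀ hq']; exact Int.lt_floor_add_one _
  constructor
  · have : (n : ℚ) < q + (q * k + c) := by linarith
    exact_mod_cast this
  · have : (q * k + c : ℚ) ≤ n := by linarith
    exact_mod_cast this

theorem FareyConsec.den_left_eq {Q : ℕ} {a q a' q' c : ℤ} (hq : 0 < q)
    (hc : a * c ≡ 1 [ZMOD q]) (hq' : 0 < q') (hco' : IsCoprime a' q')
    (h : FareyConsec Q ((a' : ℚ) / q') ((a : ℚ) / q)) :
    q' = q * ⌊((Q : ℚ) - c) / q⌋ + c := by
  set r := q * ⌊((Q : ℚ) - c) / q⌋ + c with hr_def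
  obtain ⟨hQr, hrQ⟩ : (Q : ℤ) < q + r ∧ r ≤ Q := by
    simpa using mul_floor_div_add_bounds (n := Q) (c := c) hq
  have har : a * r ≡ 1 [ZMOD q] := by
    have : a * r = a * c + q * (a * ⌊((Q : ℚ) - c) / q⌋) := by rw [hr_def]; ring
    rw [this]; exact Int.modEq_add_fac_self.trans hc
  obtain ⟨p, hp⟩ := har.symm.dvd
  have hdet : a * r - p * q = 1 := by linear_combination hp
  have hqQ : q ≤ Q := by
    have := h.2.1.2.2
    have := Rat.den_intCast_div_intCast (a := a) hq ⟨r, -p, by linear_combination hdet⟩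
    omega
  have hr : 0 < r := by omega
  have hq0 : (0 : ℚ) < q := by exact_mod_cast hq
  have ha : 0 < a := by
    have : 0 < (a : ℚ) / q := h.1.1.trans_lt h.2.2.1
    exact_mod_cast (div_pos_iff_of_pos_right hq0).mp this
  have haq : a ≤ q := by exact_mod_cast (div_le_one hq0).mp h.2.1.2.1
  have hcop : IsCoprime p r := ⟨-q, a, by linear_combination hdet⟩
  have hp0 : 0 ≤ p := by nlinarith
  have hpr : p ≤ r := by nlinarith
  have hmem : (p : ℚ) / r ∈ Farey Q := intCast_div_mem_farey hr hcop hp0 hpr hrQ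
  have hx : (a' : ℚ) / q' = p / r :=
    h.left_unique (fareyConsec_of_mul_sub_mul_eq_one hq hr hdet hQr hmem h.2.1)
  rw [← Rat.den_intCast_div_intCast hq' hco', hx, Rat.den_intCast_div_intCast hr hcop]

theorem FareyConsec.den_right_eq {Q : ℕ} {a q a'' q'' c : ℤ} (hq : 0 < q)
    (hc : a * c ≡ 1 [ZMOD q]) (hq'' : 0 < q'') (hco'' : IsCoprime a'' q'')
    (h : FareyConsec Q ((a : ℚ) / q) ((a'' : ℚ) / q'')) :
    q'' = q * ⌊((Q : ℚ) + c) / q⌋ - c := by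
  have hc' : (q - a) * -c ≡ 1 [ZMOD q] := by
    have : (q - a) * -c = a * c + q * -c := by ring
    rw [this]; exact Int.modEq_add_fac_self.trans hc
  have hreflect : FareyConsec Q (((q'' - a'' : ℤ) : ℚ) / q'') (((q - a : ℤ) : ℚ) / q) := by
    convert h.one_sub using 2 <;> push_cast <;> field_simp
  have hco : IsCoprime (q'' - a'') q'' := by
    simpa using (IsCoprime.mul_sub_left_left_iff (z := 1)).mpr hco''
  simpa [sub_eq_add_neg] using hreflect.den_left_eq hq hc' hq'' hco

theorem statement7_general (Q : ℕ)
    (q q' q'' a a' a'' abar : ℤ)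
    (hq : 2 ≤ q)
    (hq' : 1 ≤ q') (hq'' : 1 ≤ q'')
    (hco' : Int.gcd a' q' = 1) (hco'' : Int.gcd a'' q'' = 1)
    (hcons1 : FareyConsec Q ((a' : ℚ) / (q' : ℚ)) ((a : ℚ) / (q : ℚ)))
    (hcons2 : FareyConsec Q ((a : ℚ) / (q : ℚ)) ((a'' : ℚ) / (q'' : ℚ)))
    (habar : Int.ModEq q (a * abar) 1) :
    q' = q * ⌊((Q : ℚ) - (abar : ℚ)) / (q : ℚ)⌋ + abar ∧
    q'' = q * ⌊((Q : ℚ) + (abar : ℚ)) / (q : ℚ)⌋ - abar :=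
  ⟨hcons1.den_left_eq (by omega) habar (by omega) (Int.isCoprime_iff_gcd_eq_one.mpr hco'),
    hcons2.den_right_eq (by omega) habar (by omega) (Int.isCoprime_iff_gcd_eq_one.mpr hco'')⟩

theorem statement7 (Q : ℕ) (hQ : 2 ≤ Q)
    (q q' q'' a a' a'' abar : ℤ)
    (hq : 2 ≤ q) (ha1 : 1 ≤ a) (ha2 : a ≤ q - 1)
    (hq' : 1 ≤ q') (hq'' : 1 ≤ q'')
    (ha'1 : 0 ≤ a') (ha'2 : a' ≤ q') (ha''1 : 0 ≤ a'') (ha''2 : a'' ≤ q'')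
    (hco : Int.gcd a q = 1) (hco' : Int.gcd a' q' = 1) (hco'' : Int.gcd a'' q'' = 1)
    (hcons1 : FareyConsec Q ((a' : ℚ) / (q' : ℚ)) ((a : ℚ) / (q : ℚ)))
    (hcons2 : FareyConsec Q ((a : ℚ) / (q : ℚ)) ((a'' : ℚ) / (q'' : ℚ)))
    (habar1 : 1 ≤ abar) (habar2 : abar ≤ q - 1)
    (habar : Int.ModEq q (a * abar) 1) :
    q' = q * ⌊((Q : ℚ) - (abar : ℚ)) / (q : ℚ)⌋ + abar ∧
    q'' = q * ⌊((Q : ℚ) + (abar : ℚ)) / (q : ℚ)⌋ - abar :=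
  statement7_general Q q q' q'' a a' a'' abar hq hq' hq'' hco' hco'' hcons1 hcons2 habar
end

section
/- Let Q ≥ 2 be an integer and let a′/q′ < a/q < a″/q″ be three consecutive Farey fractions of order Q (in lowest terms, so q ≥ 2, 1 ≤ a ≤ q−1), and let ā be the multiplicative inverse of a mod q. Then: (i) q′ > q if and only if ā ≤ Q − q, and q′ < q if and only if ā > Q − q; (ii) q″ > q if and only if ā ≥ 2q − Q, and q″ < q if and only if ā < 2q − Q. Consequently: min(q′,q″) > q ⟺ 2q−Q ≤ ā ≤ Q−q; q′ < q < q″ ⟺ ā ≥ max(2q−Q, Q−q+1); q″ < q < q′ ⟺ ā ≤ min(2q−Q−1, Q−q); and q > max(q′,q″) ⟺ Q−q+1 ≤ ā ≤ 2q−Q−1. -/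
/-!
If `b/w < a/q` are consecutive in `F_Q`, then `a w - b q = 1` and `Q < q + w`. Indeed, let `d` be the
inverse of `a` modulo `q` taken in the window `(Q - q, Q]`, and `c = (a d - 1) / q`; then `c/d` lies
in `F_Q` just below `a/q`. A fraction strictly between two fractions of determinant `1` has
denominator at least the sum of theirs, so if `c/d < b/w` then `w ≥ d + q > Q`; hence `c/d = b/w`.

Consequently `q' ≡ ā` and `q'' ≡ q - ā (mod q)`, while both `q'` and `q''` lie in the window
`(Q - q, Q]` of length `q`. A residue `r ∈ (0, q)` is its own representative in that window when
`r > Q - q`, and otherwise its representative exceeds `q`.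
-/

open Real

namespace Int

theorem ModEq.eq_of_mem_Ioc {q N v w : ℤ} (h : v ≡ w [ZMOD q]) (hv : v ∈ Set.Ioc (N - q) N)
    (hw : w ∈ Set.Ioc (N - q) N) : v = w := by
  obtain ⟨hv₁, hv₂⟩ := hv
  obtain ⟨hw₁, hw₂⟩ := hw
  have := eq_zero_of_abs_lt_dvd h.dvd (abs_sub_lt_iff.mpr ⟨by linarith, by linarith⟩)
  omega

theorem exists_modEq_mem_Ioc {q : ℤ} (hq : 0 < q) (N u : ℤ) :
    ∃ w, w ≡ u [ZMOD q] ∧ w ∈ Set.Ioc (N - q) N := by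
  refine ⟨N - (N - u) % q, (modEq_iff_dvd.mpr ⟨(N - u) / q, ?_⟩).symm, ?_, ?_⟩
  · rw [emod_def]; ring
  · linarith [emod_lt_of_pos (N - u) hq]
  · linarith [emod_nonneg (N - u) hq.ne']

theorem ModEq.mem_Ioc_cases {q N v r : ℤ} (h : v ≡ r [ZMOD q]) (hv : v ∈ Set.Ioc (N - q) N)
    (hr : 0 < r) (hrq : r < q) (hqN : q ≤ N) :
    (r ≤ N - q ∧ q < v) ∨ (N - q < r ∧ v = r) := by
  by_cases hrN : r ≤ N - q
  · have : q ≤ v - r := le_of_dvd (by linarith [hv.1]) h.symm.dvd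
    exact .inl ⟨hrN, by linarith⟩
  · exact .inr ⟨by linarith, h.eq_of_mem_Ioc hv ⟨by linarith, by linarith⟩⟩

end Int

theorem Rat.add_den_le_den_of_lt_of_lt {x y z : ℚ} (hdet : y.num * x.den - x.num * y.den = 1)
    (hxz : x < z) (hzy : z < y) : x.den + y.den ≤ z.den := by
  rw [Rat.lt_iff] at hxz hzy
  have hsplit : (z.den : ℤ) = x.den * (y.num * z.den - z.num * y.den)
      + y.den * (z.num * x.den - x.num * z.den) := by
    linear_combination (-(z.den : ℤ)) * hdet
  have : ((x.den + y.den : ℕ) : ℤ) ≤ z.den := by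
    push_cast
    nlinarith [x.den_pos, y.den_pos]
  exact_mod_cast this

theorem Farey.exists_det_eq_one {Q : ℕ} {y : ℚ} (hy : y ∈ Farey Q) (hy0 : 0 < y) :
    ∃ x ∈ Farey Q, y.num * x.den - x.num * y.den = 1 ∧ Q < x.den + y.den := by
  have hq : (0 : ℤ) < y.den := by exact_mod_cast y.den_pos
  have ha : 0 < y.num := Rat.num_pos.mpr hy0
  obtain ⟨u, v, huv⟩ := Rat.isCoprime_num_den y
  obtain ⟨w, hwu, hw₁, hw₂⟩ := Int.exists_modEq_mem_Ioc hq Q u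
  have hw : 0 < w := by linarith [Int.ofNat_le.mpr hy.2.2]
  obtain ⟨b, hb⟩ : (y.den : ℤ) ∣ y.num * w - 1 :=
    ((Int.modEq_iff_dvd.mpr ⟨-v, by linear_combination huv⟩).trans (hwu.symm.mul_left y.num)).dvd
  have hbw : Int.gcd b w = 1 :=
    Int.isCoprime_iff_gcd_eq_one.mp ⟨-y.den, y.num, by linear_combination hb⟩
  have hnum : ((b : ℚ) / w).num = b := Rat.num_div_eq_of_coprime hw hbw
  have hden : ((((b : ℚ) / w).den : ℕ) : ℤ) = w := Rat.den_div_eq_of_coprime hw hbw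
  have hdet : y.num * (((b : ℚ) / w).den : ℤ) - ((b : ℚ) / w).num * y.den = 1 := by
    rw [hnum, hden]; linear_combination hb
  have hlt : (b : ℚ) / w < y := by rw [Rat.lt_iff]; linarith
  refine ⟨b / w, ⟨?_, hlt.le.trans hy.2.1, ?_⟩, hdet, ?_⟩
  · rw [← Rat.num_nonneg, hnum]; nlinarith
  · zify; linarith
  · zify; linarith

theorem FareyConsec.det_eq_one_and_lt_den_add_den {Q : ℕ} {x y : ℚ} (h : FareyConsec Q x y) :
    y.num * x.den - x.num * y.den = 1 ∧ Q < x.den + y.den := by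
  obtain ⟨hx, hy, hxy, hgap⟩ := h
  obtain ⟨z, hz, hdet, hQ⟩ := Farey.exists_det_eq_one hy (hx.1.trans_lt hxy)
  have hzy : z < y := by rw [Rat.lt_iff]; linarith
  have hzx : z ≤ x := not_lt.mp fun hxz => hgap z hz ⟨hxz, hzy⟩
  obtain rfl : z = x := hzx.eq_of_not_lt fun hzx =>
    (Rat.add_den_le_den_of_lt_of_lt hdet hzx hxy).not_gt (hx.2.2.trans_lt hQ)
  exact ⟨hdet, hQ⟩

theorem FareyConsec.det_eq_one_and_den_bounds_of_div {Q : ℕ} {a q b w : ℤ} (hq : 0 < q) (hw : 0 < w)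
    (hco : Int.gcd a q = 1) (hco' : Int.gcd b w = 1)
    (h : FareyConsec Q ((b : ℚ) / w) ((a : ℚ) / q)) :
    a * w - b * q = 1 ∧ (Q : ℤ) < w + q ∧ w ≤ Q ∧ q ≤ Q := by
  have hx := h.1.2.2
  have hy := h.2.1.2.2
  obtain ⟨hdet, hQ⟩ := h.det_eq_one_and_lt_den_add_den
  rw [Rat.num_div_eq_of_coprime hq hco, Rat.num_div_eq_of_coprime hw hco',
    Rat.den_div_eq_of_coprime hq hco, Rat.den_div_eq_of_coprime hw hco'] at hdet
  zify at hx hy hQ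
  simp only [Rat.den_div_eq_of_coprime hq hco, Rat.den_div_eq_of_coprime hw hco'] at hx hy hQ
  exact ⟨hdet, hQ, hx, hy⟩

theorem statement8_general (Q : ℕ)
    (q q' q'' a a' a'' abar : ℤ)
    (hq' : 1 ≤ q') (hq'' : 1 ≤ q'')
    (hco : Int.gcd a q = 1) (hco' : Int.gcd a' q' = 1) (hco'' : Int.gcd a'' q'' = 1)
    (hcons1 : FareyConsec Q ((a' : ℚ) / (q' : ℚ)) ((a : ℚ) / (q : ℚ)))
    (hcons2 : FareyConsec Q ((a : ℚ) / (q : ℚ)) ((a'' : ℚ) / (q'' : ℚ)))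
    (habar1 : 1 ≤ abar) (habar2 : abar ≤ q - 1)
    (habar : Int.ModEq q (a * abar) 1) :
    (q < q' ↔ abar ≤ (Q : ℤ) - q) ∧
    (q' < q ↔ (Q : ℤ) - q < abar) ∧
    (q < q'' ↔ 2 * q - (Q : ℤ) ≤ abar) ∧
    (q'' < q ↔ abar < 2 * q - (Q : ℤ)) ∧
    (q < min q' q'' ↔ (2 * q - (Q : ℤ) ≤ abar ∧ abar ≤ (Q : ℤ) - q)) ∧
    ((q' < q ∧ q < q'') ↔ max (2 * q - (Q : ℤ)) ((Q : ℤ) - q + 1) ≤ abar) ∧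
    ((q'' < q ∧ q < q') ↔ abar ≤ min (2 * q - (Q : ℤ) - 1) ((Q : ℤ) - q)) ∧
    (max q' q'' < q ↔ ((Q : ℤ) - q + 1 ≤ abar ∧ abar ≤ 2 * q - (Q : ℤ) - 1)) := by
  have hq0 : 0 < q := by omega
  obtain ⟨hdet', hQ', hq'Q, hqQ⟩ := hcons1.det_eq_one_and_den_bounds_of_div hq0 (by omega) hco hco'
  obtain ⟨hdet'', hQ'', -, hq''Q⟩ := hcons2.det_eq_one_and_den_bounds_of_div (by omega) hq0 hco'' hco
  have hcancel {u v : ℤ} (h : a * u ≡ a * v [ZMOD q]) : u ≡ v [ZMOD q] := by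
    have := h.cancel_left_div_gcd hq0
    rwa [Int.gcd_comm, hco, Nat.cast_one, Int.ediv_one] at this
  obtain ⟨m, hm⟩ := habar.dvd
  have hq'_modEq : q' ≡ abar [ZMOD q] :=
    hcancel (Int.modEq_iff_dvd.mpr ⟨-a' - m, by linear_combination -hm - hdet'⟩)
  have hq''_modEq : q'' ≡ q - abar [ZMOD q] :=
    hcancel (Int.modEq_iff_dvd.mpr ⟨a + m - a'', by linear_combination hm + hdet''⟩)
  rcases hq'_modEq.mem_Ioc_cases ⟨by omega, hq'Q⟩ (by omega) (by omega) hqQ with h' | h' <;>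
  rcases hq''_modEq.mem_Ioc_cases ⟨by omega, hq''Q⟩ (by omega) (by omega) hqQ with h'' | h'' <;>
  omega

theorem statement8 (Q : ℕ) (hQ : 2 ≤ Q)
    (q q' q'' a a' a'' abar : ℤ)
    (hq : 2 ≤ q) (ha1 : 1 ≤ a) (ha2 : a ≤ q - 1)
    (hq' : 1 ≤ q') (hq'' : 1 ≤ q'')
    (ha'1 : 0 ≤ a') (ha'2 : a' ≤ q') (ha''1 : 0 ≤ a'') (ha''2 : a'' ≤ q'')
    (hco : Int.gcd a q = 1) (hco' : Int.gcd a' q' = 1) (hco'' : Int.gcd a'' q'' = 1)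
    (hcons1 : FareyConsec Q ((a' : ℚ) / (q' : ℚ)) ((a : ℚ) / (q : ℚ)))
    (hcons2 : FareyConsec Q ((a : ℚ) / (q : ℚ)) ((a'' : ℚ) / (q'' : ℚ)))
    (habar1 : 1 ≤ abar) (habar2 : abar ≤ q - 1)
    (habar : Int.ModEq q (a * abar) 1) :
    (q < q' ↔ abar ≤ (Q : ℤ) - q) ∧
    (q' < q ↔ (Q : ℤ) - q < abar) ∧
    (q < q'' ↔ 2 * q - (Q : ℤ) ≤ abar) ∧
    (q'' < q ↔ abar < 2 * q - (Q : ℤ)) ∧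
    (q < min q' q'' ↔ (2 * q - (Q : ℤ) ≤ abar ∧ abar ≤ (Q : ℤ) - q)) ∧
    ((q' < q ∧ q < q'') ↔ max (2 * q - (Q : ℤ)) ((Q : ℤ) - q + 1) ≤ abar) ∧
    ((q'' < q ∧ q < q') ↔ abar ≤ min (2 * q - (Q : ℤ) - 1) ((Q : ℤ) - q)) ∧
    (max q' q'' < q ↔ ((Q : ℤ) - q + 1 ≤ abar ∧ abar ≤ 2 * q - (Q : ℤ) - 1)) :=
  statement8_general Q q q' q'' a a' a'' abar hq' hq'' hco hco' hco'' hcons1 hcons2 habar1 habar2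
    habar
end

section
/- There is an absolute constant C > 0 such that for every integer Q ≥ 2 and all coprime integers q, a with 2 ≤ q ≤ Q/2 and 1 ≤ a ≤ q−1, one has |ω_{q,a} − 2/(Q·q·(1 + a²/q²))| ≤ C/(Q²·q). -/
/-!
If `|q tan ω - a| ≤ 1/Q`, the trajectory in direction `ω` meets the scatterer at `(q, a)` before
any other: a scatterer `(m, n)` met earlier has `0 < m < q`, and then by coprimality
`1 ≤ |m a - n q| = |-m (q tan ω - a) + q (m tan ω - n)| ≤ (2q - 1)/Q < 1`.
Hence `ω_{q,a}` is the length of `arctan '' [(a - 1/Q)/q, (a + 1/Q)/q]`. Comparing it with the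
linearisation of `arctan` at `a/q`, whose derivative `1/(1 + x²)` is `1`-Lipschitz, leaves an error
of at most the squared width `(2/(qQ))²`.
-/

open Real MeasureTheory Set

/-- Free path length in the model with vertical scatterers of half-height `h`. -/
noncomputable def lv (h ω : ℝ) : ℝ :=
  sInf {τ : ℝ | 0 < τ ∧ ∃ p : ℤ × ℤ, p ≠ (0, 0) ∧
    τ * Real.cos ω = (p.1 : ℝ) ∧ |τ * Real.sin ω - (p.2 : ℝ)| ≤ h}

/-- The measure of the set of directions in `[0, π/4)` whose trajectory first
hits the vertical scatterer centered at `(q, a)`. -/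
noncomputable def omegaQA (Q : ℕ) (q a : ℤ) : ℝ :=
  (volume {ω ∈ Set.Ico (0 : ℝ) (Real.pi / 4) |
      lv (1 / (Q : ℝ)) ω * Real.cos ω = (q : ℝ) ∧
      |lv (1 / (Q : ℝ)) ω * Real.sin ω - (a : ℝ)| ≤ 1 / (Q : ℝ)}).toReal

theorem le_of_isCoprime_of_abs_mul_sub_le {q a m n : ℤ} {t h : ℝ} (hqa : IsCoprime a q)
    (hm : 0 < m) (hh : (2 * q - 1) * h < 1) (ha : |q * t - a| ≤ h) (hn : |m * t - n| ≤ h) :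
    q ≤ m := by
  by_contra! hmq
  have hne : m * a - n * q ≠ 0 := fun h0 ↦
    (Int.le_of_dvd hm (hqa.symm.dvd_of_dvd_mul_right ⟨n, by linarith⟩)).not_gt hmq
  have hone : (1 : ℝ) ≤ |((m * a - n * q : ℤ) : ℝ)| := by exact_mod_cast Int.one_le_abs hne
  have hsplit : ((m * a - n * q : ℤ) : ℝ) = -(m * (q * t - a)) + q * (m * t - n) := by
    push_cast; ring
  have hm' : (0 : ℝ) < m := by exact_mod_cast hm
  have hmq' : (m : ℝ) ≤ q - 1 := by exact_mod_cast (by omega : m ≤ q - 1)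
  have hq' : (0 : ℝ) < q := by linarith
  have hsmall : |((m * a - n * q : ℤ) : ℝ)| ≤ (2 * q - 1) * h := calc
    _ ≤ m * |q * t - a| + q * |m * t - n| := by
      rw [hsplit]
      refine (abs_add_le _ _).trans_eq ?_
      rw [abs_neg, abs_mul, abs_mul, abs_of_pos hm', abs_of_pos hq']
    _ ≤ (q - 1) * h + q * h := by
      have h0 : 0 ≤ h := (abs_nonneg _).trans ha
      nlinarith [mul_le_mul hmq' ha (abs_nonneg _) (by linarith),
        mul_le_mul_of_nonneg_left hn hq'.le]
    _ = (2 * q - 1) * h := by ring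
  linarith

theorem lv_eq_div_cos {h ω : ℝ} {q a : ℤ} (hqa : IsCoprime a q) (hq : 0 < q)
    (hh : (2 * q - 1) * h < 1) (hcos : 0 < cos ω) (ht : |q * tan ω - a| ≤ h) :
    lv h ω = q / cos ω := by
  have hsin (τ : ℝ) : τ * sin ω = τ * cos ω * tan ω := by
    rw [mul_assoc, mul_comm (cos ω), tan_mul_cos hcos.ne']
  have hq' : (0 : ℝ) < q := by exact_mod_cast hq
  refine IsLeast.csInf_eq ⟨⟨by positivity, (q, a), by simp [hq.ne'], by field_simp, ?_⟩, ?_⟩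
  · rwa [hsin, div_mul_cancel₀ _ hcos.ne']
  · rintro τ ⟨hτ, ⟨m, n⟩, -, hm, hn⟩
    rw [hsin, hm] at hn
    have hm0 : (0 : ℝ) < m := hm ▸ mul_pos hτ hcos
    rw [div_le_iff₀ hcos, hm]
    exact_mod_cast le_of_isCoprime_of_abs_mul_sub_le hqa (by exact_mod_cast hm0) hh ht hn

theorem mem_Icc_arctan_iff {α β ω : ℝ} (hω : ω ∈ Ioo (-(π / 2)) (π / 2)) :
    ω ∈ Icc (arctan α) (arctan β) ↔ tan ω ∈ Icc α β := by
  conv_lhs => rw [← arctan_tan hω.1 hω.2]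
  simp only [mem_Icc, arctan_le_arctan_iff]

theorem abs_mul_sub_le_iff_mem_Icc {q a h t : ℝ} (hq : 0 < q) :
    |q * t - a| ≤ h ↔ t ∈ Icc ((a - h) / q) ((a + h) / q) := by
  rw [abs_sub_le_iff, mem_Icc, div_le_iff₀ hq, le_div_iff₀ hq]
  constructor <;> rintro ⟨_, _⟩ <;> constructor <;> linarith

theorem firstHit_eq_Icc_arctan {h : ℝ} {q a : ℤ} (hqa : IsCoprime a q) (hq : 0 < q)
    (hh : (2 * q - 1) * h < 1) (ha : h ≤ a) (haq : a + h < q) :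
    {ω ∈ Ico (0 : ℝ) (π / 4) | lv h ω * cos ω = q ∧ |lv h ω * sin ω - a| ≤ h} =
      Icc (arctan ((a - h) / q)) (arctan ((a + h) / q)) := by
  have hq' : (0 : ℝ) < q := by exact_mod_cast hq
  have hsub : Icc (arctan ((a - h) / q)) (arctan ((a + h) / q)) ⊆ Ico 0 (π / 4) := by
    refine Icc_subset_Ico (arctan_nonneg.2 (div_nonneg (by linarith) hq'.le)) ?_
    rwa [← arctan_one, arctan_lt_arctan_iff, div_lt_one hq']
  have key : ∀ ω ∈ Ico (0 : ℝ) (π / 4), (lv h ω * cos ω = q ∧ |lv h ω * sin ω - a| ≤ h) ↔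
      ω ∈ Icc (arctan ((a - h) / q)) (arctan ((a + h) / q)) := by
    rintro ω ⟨hω0, hω1⟩
    have hω : ω ∈ Ioo (-(π / 2)) (π / 2) := ⟨by linarith [pi_pos], by linarith⟩
    have hcos : 0 < cos ω := cos_pos_of_mem_Ioo hω
    have hsin (τ : ℝ) : τ * sin ω = τ * cos ω * tan ω := by
      rw [mul_assoc, mul_comm (cos ω), tan_mul_cos hcos.ne']
    rw [mem_Icc_arctan_iff hω, ← abs_mul_sub_le_iff_mem_Icc hq']
    constructor
    · rintro ⟨hc, hs⟩
      rwa [hsin, hc] at hs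
    · intro ht
      have hlv := lv_eq_div_cos hqa hq hh hcos ht
      rw [hsin, hlv, div_mul_cancel₀ _ hcos.ne']
      exact ⟨rfl, ht⟩
  ext ω
  exact ⟨fun ⟨hω, hP⟩ ↦ (key ω hω).1 hP, fun hI ↦ ⟨hsub hI, (key ω (hsub hI)).2 hI⟩⟩

theorem omegaQA_eq_arctan_sub_arctan {Q : ℕ} {q a : ℤ} (hqa : IsCoprime a q) (ha : 0 < a)
    (haq : a < q) (hqQ : 2 * (q : ℝ) ≤ Q) :
    omegaQA Q q a = arctan ((a + 1 / Q) / q) - arctan ((a - 1 / Q) / q) := by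
  have hq : 0 < q := ha.trans haq
  have ha' : (1 : ℝ) ≤ a := by exact_mod_cast ha
  have haq' : (a : ℝ) + 1 ≤ q := by exact_mod_cast haq
  have hQ : (1 : ℝ) < Q := by linarith
  have hQinv : 1 / (Q : ℝ) < 1 := (div_lt_one (by linarith)).2 hQ
  have hQinv0 : 0 < 1 / (Q : ℝ) := one_div_pos.2 (by linarith)
  have hh : (2 * q - 1) * (1 / (Q : ℝ)) < 1 := by
    rw [← div_eq_mul_one_div, div_lt_one (by linarith)]; linarith
  rw [omegaQA, firstHit_eq_Icc_arctan hqa hq hh (by linarith) (by linarith), volume_Icc,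
    ENNReal.toReal_ofReal]
  refine sub_nonneg.2 (arctan_mono ?_)
  gcongr; linarith

theorem abs_inv_one_add_sq_sub_le (x y : ℝ) : |(1 + x ^ 2)⁻¹ - (1 + y ^ 2)⁻¹| ≤ |x - y| := by
  have hx : 0 < 1 + x ^ 2 := by positivity
  have hy : 0 < 1 + y ^ 2 := by positivity
  have hsum : |x + y| ≤ (1 + x ^ 2) * (1 + y ^ 2) := calc
    |x + y| ≤ |x| + |y| := abs_add_le x y
    _ ≤ 1 + x ^ 2 + y ^ 2 := by
      nlinarith [sq_abs x, sq_abs y, sq_nonneg (|x| - 1 / 2), sq_nonneg (|y| - 1 / 2)]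
    _ ≤ (1 + x ^ 2) * (1 + y ^ 2) := by nlinarith [mul_nonneg (sq_nonneg x) (sq_nonneg y)]
  rw [inv_sub_inv hx.ne' hy.ne', abs_div, abs_of_pos (mul_pos hx hy),
    div_le_iff₀ (mul_pos hx hy), show 1 + y ^ 2 - (1 + x ^ 2) = -((x - y) * (x + y)) by ring,
    abs_neg, abs_mul]
  gcongr

theorem abs_arctan_sub_arctan_sub_le {α β c : ℝ} (hαβ : α ≤ β) (hc : c ∈ Icc α β) :
    |arctan β - arctan α - (β - α) / (1 + c ^ 2)| ≤ (β - α) ^ 2 := by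
  have hint : arctan β - arctan α - (β - α) / (1 + c ^ 2) =
      ∫ x in α..β, ((1 + x ^ 2)⁻¹ - (1 + c ^ 2)⁻¹) := by
    rw [intervalIntegral.integral_sub _ intervalIntegrable_const, integral_inv_one_add_sq,
      intervalIntegral.integral_const, smul_eq_mul, div_eq_mul_inv]
    exact (Continuous.inv₀ (by fun_prop) fun x ↦ by positivity).intervalIntegrable α β
  have hbound : ∀ x ∈ uIoc α β, ‖(1 + x ^ 2)⁻¹ - (1 + c ^ 2)⁻¹‖ ≤ β - α := fun x hx ↦ by
    rw [uIoc_of_le hαβ] at hx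
    refine (abs_inv_one_add_sq_sub_le x c).trans (abs_le.2 ⟨?_, ?_⟩) <;>
      linarith [hx.1, hx.2, hc.1, hc.2]
  calc _ = ‖∫ x in α..β, ((1 + x ^ 2)⁻¹ - (1 + c ^ 2)⁻¹)‖ := by rw [hint, norm_eq_abs]
    _ ≤ (β - α) * |β - α| := intervalIntegral.norm_integral_le_of_norm_le_const hbound
    _ = (β - α) ^ 2 := by rw [abs_of_nonneg (sub_nonneg.2 hαβ)]; ring

theorem statement9 :
    ∃ C > 0, ∀ Q : ℕ, 2 ≤ Q → ∀ q a : ℤ, Int.gcd a q = 1 →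
      2 ≤ q → (q : ℝ) ≤ (Q : ℝ) / 2 → 1 ≤ a → a ≤ q - 1 →
      |omegaQA Q q a - 2 / ((Q : ℝ) * (q : ℝ) * (1 + (a : ℝ) ^ 2 / (q : ℝ) ^ 2))|
        ≤ C / ((Q : ℝ) ^ 2 * (q : ℝ)) := by
  refine ⟨4, by norm_num, fun Q _ q a hgcd _ hqQ ha1 haq ↦ ?_⟩
  have hq : (0 : ℝ) < q := by exact_mod_cast (by omega : (0 : ℤ) < q)
  have hq1 : (1 : ℝ) ≤ q := by exact_mod_cast (by omega : (1 : ℤ) ≤ q)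
  have hQ : (0 : ℝ) < Q := by positivity
  rw [omegaQA_eq_arctan_sub_arctan (Int.isCoprime_iff_gcd_eq_one.2 hgcd) ha1 (by omega)
    (by linarith)]
  set α : ℝ := (a - 1 / Q) / q
  set β : ℝ := (a + 1 / Q) / q
  have hwidth : β - α = 2 / (q * Q) := by simp only [α, β]; field_simp; ring
  have hlin : (β - α) / (1 + (a / q : ℝ) ^ 2) = 2 / (Q * q * (1 + (a : ℝ) ^ 2 / q ^ 2)) := by
    rw [hwidth, div_pow, div_div, mul_comm (q : ℝ)]
  have hc : (a / q : ℝ) ∈ Icc α β := by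
    simp only [α, β, mem_Icc]
    constructor <;> gcongr <;> linarith [one_div_pos.2 hQ]
  calc _ = |arctan β - arctan α - (β - α) / (1 + (a / q : ℝ) ^ 2)| := by rw [hlin]
    _ ≤ (β - α) ^ 2 := abs_arctan_sub_arctan_sub_le (hc.1.trans hc.2) hc
    _ = 4 / (Q ^ 2 * q ^ 2) := by rw [hwidth]; ring
    _ ≤ 4 / (Q ^ 2 * q) := by gcongr; nlinarith
end
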